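/- arXiv:2309.00024 — 2 statements merged into one kernel-verified Lean document; each statement's English description precedes it below -/
import Mathlib

section
/- (Proposition 1 of EMVGC-LG.) Let λ ∈ (0,1], μ₁ > 0, μ = λμ₁. For views p = 1,…,v let X^{(p)} ∈ ℝ^{d_p×n} and A^{(p)} ∈ ℝ^{d_p×m}, and let Z ∈ ℝ^{m×n} satisfy Z ≥ 0 and Zᵀ𝟙_m = 𝟙_n. Define F(A,Z) = ∑_p [tr(Zᵀ A^{(p)ᵀ}A^{(p)} Z) − 2 tr(X^{(p)ᵀ}A^{(p)}Z) + λ tr(A^{(p)} diag(Z𝟙_n) A^{(p)ᵀ})] + μ tr(ZᵀZ), and G(A,Z) = λ ∑_{i=1}^n ∑_{j=1}^m [∑_p ‖x_i^{(p)} − a_j^{(p)}‖₂² z_{ji} + μ₁ z_{ji}²]. Then F(A,Z) + ∑_p tr(X^{(p)ᵀ}X^{(p)}) ≥ G(A,Z). -/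
open Matrix

theorem aux_expand (n m dp : ℕ)
    (X : Matrix (Fin dp) (Fin n) ℝ) (A : Matrix (Fin dp) (Fin m) ℝ)
    (Z : Matrix (Fin m) (Fin n) ℝ) (hcol : ∀ i, ∑ j, Z j i = 1) :
    ∑ i, ∑ j, (∑ k, (X k i - A k j)^2) * Z j i
      = (∑ i, ∑ k, (X k i)^2)
        - 2 * (∑ i, ∑ k, X k i * (∑ j, A k j * Z j i))
        + ∑ j, (∑ i, Z j i) * (∑ k, (A k j)^2) := by
  have step1 : ∑ i, ∑ j, (∑ k, (X k i - A k j)^2) * Z j i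
      = ∑ i, ∑ j, ((∑ k, (X k i)^2 * Z j i)
          - 2 * (∑ k, X k i * (A k j * Z j i)) + ∑ k, (A k j)^2 * Z j i) := by
    refine Finset.sum_congr rfl fun i _ => Finset.sum_congr rfl fun j _ => ?_
    simp only [Finset.sum_mul, Finset.mul_sum, ← Finset.sum_sub_distrib,
      ← Finset.sum_add_distrib]
    refine Finset.sum_congr rfl fun k _ => by ring
  rw [step1]
  simp only [Finset.sum_add_distrib, Finset.sum_sub_distrib, ← Finset.mul_sum]
  congr 1
  · congr 1
    · refine Finset.sum_congr rfl fun i _ => ?_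
      rw [Finset.sum_comm]
      refine Finset.sum_congr rfl fun k _ => ?_
      rw [← Finset.mul_sum, hcol i, mul_one]
    · congr 1
      refine Finset.sum_congr rfl fun i _ => ?_
      rw [Finset.sum_comm]
      refine Finset.sum_congr rfl fun k _ => ?_
      rw [← Finset.mul_sum]
  · rw [Finset.sum_comm]
    refine Finset.sum_congr rfl fun j _ => ?_
    rw [Finset.mul_sum, Finset.sum_comm]
    refine Finset.sum_congr rfl fun k _ => ?_
    rw [Finset.sum_mul]
    refine Finset.sum_congr rfl fun i _ => by ring

theorem emvgclg_prop1 (v n m : ℕ) (d : Fin v → ℕ)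
    (lam mu1 mu : ℝ) (hlam0 : 0 < lam) (hlam1 : lam ≤ 1)
    (hmu1 : 0 < mu1) (hmu : mu = lam * mu1)
    (X : ∀ p : Fin v, Matrix (Fin (d p)) (Fin n) ℝ)
    (A : ∀ p : Fin v, Matrix (Fin (d p)) (Fin m) ℝ)
    (Z : Matrix (Fin m) (Fin n) ℝ)
    (hZ : ∀ j i, 0 ≤ Z j i) (hcol : ∀ i, ∑ j, Z j i = 1) :
    (∑ p, (((Zᵀ * (A p)ᵀ * A p * Z).trace
        - 2 * ((X p)ᵀ * A p * Z).trace
        + lam * (A p * diagonal (Z.mulVec 1) * (A p)ᵀ).trace))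
      + mu * (Zᵀ * Z).trace)
      + ∑ p, ((X p)ᵀ * X p).trace ≥
    lam * ∑ i, ∑ j,
      ((∑ p, ∑ k, (X p k i - A p k j) ^ 2) * Z j i + mu1 * (Z j i) ^ 2) := by
  -- trace rewrites
  have hT1 : ∀ p : Fin v, (Zᵀ * (A p)ᵀ * A p * Z).trace
      = ∑ i, ∑ k, (∑ j, A p k j * Z j i)^2 := by
    intro p
    have : Zᵀ * (A p)ᵀ * A p * Z = (A p * Z)ᵀ * (A p * Z) := by
      rw [transpose_mul, Matrix.mul_assoc]
    rw [this]
    simp only [Matrix.trace, Matrix.mul_apply, Matrix.diag, Matrix.transpose_apply, sq]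
  have hT2 : ∀ p : Fin v, ((X p)ᵀ * A p * Z).trace
      = ∑ i, ∑ k, X p k i * (∑ j, A p k j * Z j i) := by
    intro p
    rw [Matrix.mul_assoc]
    simp [Matrix.trace, Matrix.mul_apply, Matrix.diag]
  have hT3 : ∀ p : Fin v, (A p * diagonal (Z.mulVec 1) * (A p)ᵀ).trace
      = ∑ j, (∑ i, Z j i) * (∑ k, (A p k j)^2) := by
    intro p
    simp only [Matrix.trace, Matrix.diag, Matrix.mul_apply, Matrix.transpose_apply,
      Matrix.diagonal_apply, mul_ite, mul_zero, Finset.sum_ite_eq', Finset.mem_univ, if_true]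
    rw [Finset.sum_comm]
    refine Finset.sum_congr rfl fun j _ => ?_
    rw [Finset.mul_sum]
    refine Finset.sum_congr rfl fun k _ => ?_
    simp only [Matrix.mulVec, dotProduct, Pi.one_apply, mul_one, sq]
    ring
  have hT4 : (Zᵀ * Z).trace = ∑ i, ∑ j, (Z j i)^2 := by
    simp [Matrix.trace, Matrix.mul_apply, Matrix.diag, sq]
  have hT5 : ∀ p : Fin v, ((X p)ᵀ * X p).trace = ∑ i, ∑ k, (X p k i)^2 := by
    intro p
    simp [Matrix.trace, Matrix.mul_apply, Matrix.diag, sq]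
  -- RHS rewrite
  have hR : ∑ i, ∑ j, ((∑ p, ∑ k, (X p k i - A p k j) ^ 2) * Z j i + mu1 * (Z j i) ^ 2)
      = (∑ p, ((∑ i, ∑ k, (X p k i)^2)
          - 2 * (∑ i, ∑ k, X p k i * (∑ j, A p k j * Z j i))
          + ∑ j, (∑ i, Z j i) * (∑ k, (A p k j)^2)))
        + mu1 * ∑ i, ∑ j, (Z j i)^2 := by
    have e0 : ∑ i, ∑ j, ((∑ p, ∑ k, (X p k i - A p k j) ^ 2) * Z j i + mu1 * (Z j i) ^ 2)
        = (∑ i, ∑ j, (∑ p, ∑ k, (X p k i - A p k j) ^ 2) * Z j i)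
          + mu1 * ∑ i, ∑ j, (Z j i)^2 := by
      simp only [Finset.sum_add_distrib, Finset.mul_sum]
    rw [e0]
    congr 1
    calc ∑ i, ∑ j, (∑ p, ∑ k, (X p k i - A p k j) ^ 2) * Z j i
        = ∑ i, ∑ j, ∑ p, (∑ k, (X p k i - A p k j) ^ 2) * Z j i := by
          simp only [Finset.sum_mul]
      _ = ∑ i, ∑ p, ∑ j, (∑ k, (X p k i - A p k j) ^ 2) * Z j i := by
          exact Finset.sum_congr rfl fun i _ => Finset.sum_comm
      _ = ∑ p, ∑ i, ∑ j, (∑ k, (X p k i - A p k j) ^ 2) * Z j i := Finset.sum_comm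
      _ = _ := Finset.sum_congr rfl fun p _ => aux_expand n m (d p) (X p) (A p) Z hcol
  rw [hR, hT4, hmu]
  simp only [hT1, hT2, hT3, hT5]
  -- per-view inequality
  have key : ∀ p : Fin v,
      lam * ((∑ i, ∑ k, (X p k i)^2)
          - 2 * (∑ i, ∑ k, X p k i * (∑ j, A p k j * Z j i))
          + ∑ j, (∑ i, Z j i) * (∑ k, (A p k j)^2))
      ≤ ((∑ i, ∑ k, (∑ j, A p k j * Z j i)^2)
          - 2 * (∑ i, ∑ k, X p k i * (∑ j, A p k j * Z j i))
          + lam * ∑ j, (∑ i, Z j i) * (∑ k, (A p k j)^2))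
        + ∑ i, ∑ k, (X p k i)^2 := by
    intro p
    have h : 0 ≤ ∑ i, ∑ k, ((∑ j, A p k j * Z j i)^2
        - 2 * (X p k i * (∑ j, A p k j * Z j i)) + (X p k i)^2
        - lam * (X p k i)^2 + 2 * lam * (X p k i * (∑ j, A p k j * Z j i))) := by
      refine Finset.sum_nonneg fun i _ => Finset.sum_nonneg fun k _ => ?_
      set t := ∑ j, A p k j * Z j i
      set x := X p k i
      nlinarith [sq_nonneg (t - (1 - lam) * x), sq_nonneg x,
        mul_nonneg (mul_nonneg hlam0.le (sub_nonneg.2 hlam1)) (sq_nonneg x)]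
    have hsplit : ∑ i, ∑ k, ((∑ j, A p k j * Z j i)^2
        - 2 * (X p k i * (∑ j, A p k j * Z j i)) + (X p k i)^2
        - lam * (X p k i)^2 + 2 * lam * (X p k i * (∑ j, A p k j * Z j i)))
        = (∑ i, ∑ k, (∑ j, A p k j * Z j i)^2)
          - 2 * (∑ i, ∑ k, X p k i * (∑ j, A p k j * Z j i))
          + (∑ i, ∑ k, (X p k i)^2)
          - lam * (∑ i, ∑ k, (X p k i)^2)
          + 2 * lam * (∑ i, ∑ k, X p k i * (∑ j, A p k j * Z j i)) := by
      simp only [Finset.sum_add_distrib, Finset.sum_sub_distrib, ← Finset.mul_sum]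
    rw [hsplit] at h
    nlinarith [h]
  have hsum := Finset.sum_le_sum fun p (_ : p ∈ (Finset.univ : Finset (Fin v))) => key p
  rw [Finset.sum_add_distrib] at hsum
  have e1 : lam * ((∑ p, ((∑ i, ∑ k, (X p k i)^2)
          - 2 * (∑ i, ∑ k, X p k i * (∑ j, A p k j * Z j i))
          + ∑ j, (∑ i, Z j i) * (∑ k, (A p k j)^2)))
        + mu1 * ∑ i, ∑ j, (Z j i)^2)
      = (∑ p, lam * ((∑ i, ∑ k, (X p k i)^2)
          - 2 * (∑ i, ∑ k, X p k i * (∑ j, A p k j * Z j i))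
          + ∑ j, (∑ i, Z j i) * (∑ k, (A p k j)^2)))
        + lam * mu1 * ∑ i, ∑ j, (Z j i)^2 := by
    rw [mul_add, Finset.mul_sum, mul_assoc]
  rw [e1]
  linarith [hsum]
end

section
/- Under the assumptions of Proposition 1 of EMVGC-LG, the objective F(A,Z) = ∑_p [tr(Zᵀ A^{(p)ᵀ}A^{(p)} Z) − 2 tr(X^{(p)ᵀ}A^{(p)}Z) + λ tr(A^{(p)} diag(Z𝟙_n) A^{(p)ᵀ})] + μ tr(ZᵀZ) is bounded below by −∑_p tr(X^{(p)ᵀ}X^{(p)}), for all A^{(p)} ∈ ℝ^{d_p×m} and all Z ∈ ℝ^{m×n} with Z ≥ 0 and Zᵀ𝟙_m = 𝟙_n, λ ∈ (0,1], μ ≥ 0. -/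
open Matrix

lemma trace_transpose_mul_self_nonneg {a b : ℕ} (M : Matrix (Fin a) (Fin b) ℝ) :
    0 ≤ (Mᵀ * M).trace := by
  rw [Matrix.trace]
  refine Finset.sum_nonneg fun j _ => ?_
  simp only [Matrix.diag_apply, Matrix.mul_apply, Matrix.transpose_apply]
  exact Finset.sum_nonneg fun i _ => mul_self_nonneg _

lemma trace_diag_sandwich_nonneg {a b : ℕ} (A : Matrix (Fin a) (Fin b) ℝ)
    (w : Fin b → ℝ) (hw : ∀ k, 0 ≤ w k) :
    0 ≤ (A * diagonal w * Aᵀ).trace := by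
  rw [Matrix.trace]
  refine Finset.sum_nonneg fun i _ => ?_
  simp only [Matrix.diag_apply, Matrix.mul_apply, Matrix.transpose_apply,
    Matrix.diagonal_apply]
  refine Finset.sum_nonneg fun k _ => ?_
  rw [Finset.sum_eq_single k (by intro j _ h; simp [h]) (by simp)]
  simp only [if_true]
  nlinarith [hw k, mul_self_nonneg (A i k)]

theorem emvgclg_lower_bound (v n m : ℕ) (d : Fin v → ℕ)
    (lam mu : ℝ) (hlam0 : 0 < lam) (hlam1 : lam ≤ 1) (hmu : 0 ≤ mu)
    (X : ∀ p : Fin v, Matrix (Fin (d p)) (Fin n) ℝ) :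
    ∀ (A : ∀ p : Fin v, Matrix (Fin (d p)) (Fin m) ℝ)
      (Z : Matrix (Fin m) (Fin n) ℝ),
      (∀ j i, 0 ≤ Z j i) → (∀ i, ∑ j, Z j i = 1) →
      (∑ p, (((Zᵀ * (A p)ᵀ * A p * Z).trace
          - 2 * ((X p)ᵀ * A p * Z).trace
          + lam * (A p * diagonal (Z.mulVec 1) * (A p)ᵀ).trace))
        + mu * (Zᵀ * Z).trace) ≥
        - ∑ p, ((X p)ᵀ * X p).trace := by
  intro A Z hZ hcol
  have hw : ∀ k, 0 ≤ Z.mulVec 1 k := by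
    intro k
    simp only [Matrix.mulVec, dotProduct, Pi.one_apply, mul_one]
    exact Finset.sum_nonneg fun i _ => hZ k i
  have hmuZ : 0 ≤ mu * (Zᵀ * Z).trace :=
    mul_nonneg hmu (trace_transpose_mul_self_nonneg Z)
  have key : ∀ p : Fin v,
      0 ≤ (Zᵀ * (A p)ᵀ * A p * Z).trace - 2 * ((X p)ᵀ * A p * Z).trace
          + lam * (A p * diagonal (Z.mulVec 1) * (A p)ᵀ).trace
          + ((X p)ᵀ * X p).trace := by
    intro p
    have h1 : 0 ≤ ((A p * Z - X p)ᵀ * (A p * Z - X p)).trace :=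
      trace_transpose_mul_self_nonneg _
    have h2 : 0 ≤ lam * (A p * diagonal (Z.mulVec 1) * (A p)ᵀ).trace :=
      mul_nonneg hlam0.le (trace_diag_sandwich_nonneg _ _ hw)
    have expand : ((A p * Z - X p)ᵀ * (A p * Z - X p)).trace =
        (Zᵀ * (A p)ᵀ * A p * Z).trace - 2 * ((X p)ᵀ * A p * Z).trace
          + ((X p)ᵀ * X p).trace := by
      have hswap : ((Zᵀ * (A p)ᵀ) * X p).trace = ((X p)ᵀ * (A p * Z)).trace := by
        rw [← Matrix.trace_transpose ((Zᵀ * (A p)ᵀ) * X p)]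
        simp [Matrix.transpose_mul, Matrix.mul_assoc]
      rw [Matrix.transpose_sub, Matrix.sub_mul, Matrix.mul_sub, Matrix.mul_sub,
        Matrix.transpose_mul, Matrix.trace_sub, Matrix.trace_sub, Matrix.trace_sub,
        hswap]
      simp only [Matrix.mul_assoc]
      ring
    linarith
  have hsum : 0 ≤ ∑ p, ((Zᵀ * (A p)ᵀ * A p * Z).trace
      - 2 * ((X p)ᵀ * A p * Z).trace
      + lam * (A p * diagonal (Z.mulVec 1) * (A p)ᵀ).trace
      + ((X p)ᵀ * X p).trace) := Finset.sum_nonneg fun p _ => key p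
  rw [Finset.sum_add_distrib] at hsum
  linarith
end
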